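/- Let p = 2, n ≥ 1, and d = 2^k + 1 with e = gcd(n, k) and n/e odd. For the Walsh transform W_d(a) = ∑_{x ∈ F_{2^n}} (−1)^{Tr(x^d + ax)}, every value W_d(a) lies in {0, ±2^{(n+e)/2}}. -/

import Mathlib

noncomputable instance (p n : ℕ) [Fact p.Prime] : Fintype (GaloisField p n) :=
  Fintype.ofFinite _

/-- `ω = exp(2πi/p)` raised to (the integer lift of) an element of `F_p`. -/
noncomputable def ew (p : ℕ) (x : ZMod p) : ℂ :=
  Complex.exp (2 * Real.pi * Complex.I / p) ^ x.val

/-- The absolute trace from `F_{p^n}` to `F_p`. -/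
noncomputable def Tr (p n : ℕ) [Fact p.Prime] (x : GaloisField p n) : ZMod p :=
  Algebra.trace (ZMod p) (GaloisField p n) x

instance : Fact (Nat.Prime 2) := ⟨Nat.prime_two⟩

/-!
Over `F_2` the map `f x = Tr (x ^ (2 ^ k + 1) + a * x)` is a quadratic function with polar form
`B x w = Tr (x ^ 2 ^ k * w + x * w ^ 2 ^ k)`, additive in each argument. Squaring the Walsh sum `W`
and substituting `y = x + w` gives `W ^ 2 = 2 ^ n * ∑_{w ∈ rad B} (-1) ^ f w`, and `f` is additive
on the radical, so this last sum is `0` or `#(rad B)`. Since `Tr` is Frobenius invariant,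
`B x w = Tr (x ^ 2 ^ k * (w + w ^ 2 ^ (2 * k)))`, so by nondegeneracy of the trace form the radical
is the fixed field of `w ↦ w ^ 2 ^ gcd n (2 * k)`, and `gcd n (2 * k) = e` because `n / e` is odd.
Hence `W ^ 2 ∈ {0, 2 ^ (n + e)}` with `n + e` even.
-/

open Finset QuadraticMap

theorem ew_eq_stdAddChar (p : ℕ) [NeZero p] (x : ZMod p) : ew p x = ZMod.stdAddChar x := by
  rw [ew, ZMod.stdAddChar_apply, ZMod.toCircle_apply, ← Complex.exp_nat_mul]
  ring_nf

theorem sum_stdAddChar_comp_eq_ite {G : Type*} [AddCommGroup G] [Fintype G] {N : ℕ} [NeZero N]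
    (g : G →+ ZMod N) :
    ∑ x, ZMod.stdAddChar (g x) = if g = 0 then (Nat.card G : ℂ) else 0 := by
  classical
  have hzero : ZMod.stdAddChar.compAddMonoidHom g = 0 ↔ g = 0 := by
    simp only [AddChar.ext_iff, AddMonoidHom.ext_iff, AddChar.compAddMonoidHom_apply,
      AddChar.zero_apply, AddMonoidHom.zero_apply]
    refine forall_congr' fun x => ?_
    rw [← AddChar.map_zero_eq_one (ZMod.stdAddChar (N := N)), ZMod.injective_stdAddChar.eq_iff]
  simp_rw [← AddChar.compAddMonoidHom_apply, AddChar.sum_eq_ite, hzero, Nat.card_eq_fintype_card]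

section QuadraticFunction

variable {G : Type*} [AddCommGroup G] {f : G → ZMod 2}

def polarHom (hf : ∀ x y w, polar f (x + y) w = polar f x w + polar f y w) :
    G →+ G →+ ZMod 2 :=
  AddMonoidHom.mk' (fun w => AddMonoidHom.mk' (fun x => polar f x w) fun x y => hf x y w)
    fun w w' => by
      ext x
      simp only [AddMonoidHom.mk'_apply, AddMonoidHom.add_apply, polar_comm f x, hf]

variable (hf : ∀ x y w, polar f (x + y) w = polar f x w + polar f y w)

theorem mem_ker_polarHom {w : G} : w ∈ (polarHom hf).ker ↔ ∀ x, polar f x w = 0 := by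
  simp [AddMonoidHom.mem_ker, AddMonoidHom.ext_iff, polarHom]

variable [Fintype G]

local notation "ψ" => (ZMod.stdAddChar : AddChar (ZMod 2) ℂ)

theorem sum_stdAddChar_mul_self_eq [Fintype (polarHom hf).ker] :
    (∑ x, ψ (f x)) * ∑ x, ψ (f x) =
      Nat.card G * ∑ w : (polarHom hf).ker, ψ (f w) := by
  classical
  have hpolar (x w : G) : ψ (f x) * ψ (f (x + w)) = ψ (f w) * ψ (polar f x w) := by
    rw [← AddChar.map_add_eq_mul, ← AddChar.map_add_eq_mul, QuadraticMap.map_add f, ← add_assoc,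
      ← add_assoc, CharTwo.add_self_eq_zero, zero_add]
  calc (∑ x, ψ (f x)) * ∑ y, ψ (f y)
      = ∑ x, ∑ w, ψ (f x) * ψ (f (x + w)) := by
        rw [sum_mul_sum]
        exact sum_congr rfl fun x _ => (Fintype.sum_equiv (Equiv.addLeft x) _ _ fun _ => rfl).symm
    _ = ∑ w, ψ (f w) * ∑ x, ψ (polarHom hf w x) := by
        simp_rw [hpolar, mul_sum]
        exact sum_comm
    _ = ∑ w, if w ∈ (polarHom hf).ker then Nat.card G * ψ (f w) else 0 := by
        simp_rw [sum_stdAddChar_comp_eq_ite, AddMonoidHom.mem_ker, mul_ite, mul_zero, mul_comm]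
    _ = Nat.card G * ∑ w : (polarHom hf).ker, ψ (f w) := by
        rw [← sum_filter, mul_sum]
        exact sum_subtype _ (by simp) _

def radicalHom : (polarHom hf).ker →+ ZMod 2 :=
  AddMonoidHom.mk' (fun w => f w) fun x y => by
    rw [AddSubgroup.coe_add, QuadraticMap.map_add f, (mem_ker_polarHom hf).1 y.2, add_zero]

theorem sum_stdAddChar_mul_self_eq_zero_or :
    (∑ x, ψ (f x)) * ∑ x, ψ (f x) = 0 ∨
      (∑ x, ψ (f x)) * ∑ x, ψ (f x) =
        Nat.card G * Nat.card (polarHom hf).ker := by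
  classical
  rw [sum_stdAddChar_mul_self_eq hf]
  have hsum : ∑ w : (polarHom hf).ker, ψ (f w) = ∑ w, ψ (radicalHom hf w) := rfl
  rw [hsum, sum_stdAddChar_comp_eq_ite]
  split_ifs
  · exact Or.inr rfl
  · exact Or.inl (mul_zero _)

end QuadraticFunction

theorem Algebra.trace_pow_card_pow (K : Type*) {L : Type*} [Field K] [Fintype K] [Field L]
    [Algebra K L] [Algebra.IsAlgebraic K L] (x : L) (m : ℕ) :
    Algebra.trace K L (x ^ Fintype.card K ^ m) = Algebra.trace K L x := by
  have := Algebra.trace_eq_of_algEquiv (FiniteField.frobeniusAlgEquivOfAlgebraic K L ^ m) x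
  rwa [AlgEquiv.coe_pow, FiniteField.coe_frobeniusAlgEquivOfAlgebraic_iterate] at this

theorem isPeriodicPt_frobenius_iff {R : Type*} [CommSemiring R] (p : ℕ) [ExpChar R p] {m : ℕ}
    {x : R} : Function.IsPeriodicPt (frobenius R p) m x ↔ x ^ p ^ m = x := by
  rw [Function.IsPeriodicPt, Function.IsFixedPt, iterate_frobenius]

theorem Nat.gcd_two_mul_right_of_odd {n k : ℕ} (h : Odd (n / n.gcd k)) :
    n.gcd (2 * k) = n.gcd k := by
  have hpos : 0 < n.gcd k :=
    Nat.gcd_pos_of_pos_left _ (Nat.pos_of_ne_zero (by rintro rfl; simp at h))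
  set g := n.gcd k
  calc n.gcd (2 * k) = (g * (n / g)).gcd (g * (2 * (k / g))) := by
        rw [mul_left_comm, Nat.mul_div_cancel' (Nat.gcd_dvd_left n k),
          Nat.mul_div_cancel' (Nat.gcd_dvd_right n k)]
    _ = g * (n / g).gcd (2 * (k / g)) := Nat.gcd_mul_left ..
    _ = g := by
        rw [Nat.Coprime.gcd_mul_left_cancel_right _ (Nat.coprime_two_left.mpr h),
          Nat.coprime_div_gcd_div_gcd hpos, mul_one]

theorem Nat.even_add_gcd_of_odd {n k : ℕ} (h : Odd (n / n.gcd k)) : Even (n + n.gcd k) := by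
  obtain ⟨m, hm⟩ := h
  have hn : n / n.gcd k * n.gcd k = n := Nat.div_mul_cancel (Nat.gcd_dvd_left n k)
  rw [hm] at hn
  exact ⟨(m + 1) * n.gcd k, by linarith⟩

theorem GaloisField.card_pow_eq_self {p n e : ℕ} [Fact p.Prime] (hn : n ≠ 0) (he : e ∣ n) :
    Nat.card {w : GaloisField p n // w ^ p ^ e = w} = p ^ e := by
  have he0 : e ≠ 0 := by rintro rfl; exact hn (Nat.eq_zero_of_zero_dvd he)
  obtain ⟨φ⟩ : Nonempty (GaloisField p e →ₐ[ZMod p] GaloisField p n) :=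
    FiniteField.nonempty_algHom_of_finrank_dvd (by rwa [finrank p he0, finrank p hn])
  apply le_antisymm
  · classical
    have hX : (Polynomial.X ^ p ^ e - Polynomial.X : Polynomial (GaloisField p n)) ≠ 0 :=
      FiniteField.X_pow_card_pow_sub_X_ne_zero _ he0 (Fact.out : p.Prime).one_lt
    rw [Nat.card_eq_fintype_card, Fintype.card_subtype]
    refine (Polynomial.card_le_degree_of_subset_roots fun w hw => ?_).trans_eq
      (FiniteField.X_pow_card_pow_sub_X_natDegree_eq _ he0 (Fact.out : p.Prime).one_lt)
    rw [Finset.mem_val, Finset.mem_filter] at hw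
    rw [Polynomial.mem_roots hX, Polynomial.IsRoot.def, Polynomial.eval_sub, Polynomial.eval_pow,
      Polynomial.eval_X, hw.2, sub_self]
  · have hφ (y : GaloisField p e) : φ y ^ p ^ e = φ y := by
      rw [← map_pow, ← GaloisField.card p e he0, Nat.card_eq_fintype_card, FiniteField.pow_card]
    calc p ^ e = Nat.card (GaloisField p e) := (GaloisField.card p e he0).symm
      _ ≤ _ := Nat.card_le_card_of_injective (fun y => ⟨φ y, hφ y⟩)
          fun y y' h => φ.injective (congrArg Subtype.val h)

section Gold

variable {n : ℕ} (k : ℕ) (a : GaloisField 2 n)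

theorem Tr_pow_two_pow (x : GaloisField 2 n) (m : ℕ) : Tr 2 n (x ^ 2 ^ m) = Tr 2 n x := by
  simpa [Tr, ZMod.card] using Algebra.trace_pow_card_pow (ZMod 2) x m

theorem polar_gold (x w : GaloisField 2 n) :
    polar (fun x => Tr 2 n (x ^ (2 ^ k + 1) + a * x)) x w =
      Tr 2 n (x ^ 2 ^ k * w + x * w ^ 2 ^ k) := by
  simp only [polar, Tr, ← map_sub, pow_succ, add_pow_char_pow]
  congr 1
  ring

theorem polar_gold_add_left (x y w : GaloisField 2 n) :
    polar (fun x => Tr 2 n (x ^ (2 ^ k + 1) + a * x)) (x + y) w =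
      polar (fun x => Tr 2 n (x ^ (2 ^ k + 1) + a * x)) x w +
        polar (fun x => Tr 2 n (x ^ (2 ^ k + 1) + a * x)) y w := by
  rw [polar_gold, polar_gold, polar_gold]
  simp only [Tr, ← map_add, add_pow_char_pow]
  congr 1
  ring

theorem polar_gold_eq_zero_iff (w : GaloisField 2 n) :
    (∀ x, polar (fun x => Tr 2 n (x ^ (2 ^ k + 1) + a * x)) x w = 0) ↔ w ^ 2 ^ (2 * k) = w := by
  -- applying `Tr (y ^ 2 ^ k) = Tr y` to the second summand pulls `x ^ 2 ^ k` out of the form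
  have hpolar (x : GaloisField 2 n) : polar (fun x => Tr 2 n (x ^ (2 ^ k + 1) + a * x)) x w =
      Tr 2 n (x ^ 2 ^ k * (w + w ^ 2 ^ (2 * k))) := by
    have hsnd : Tr 2 n (x * w ^ 2 ^ k) = Tr 2 n (x ^ 2 ^ k * w ^ 2 ^ (2 * k)) := by
      rw [← Tr_pow_two_pow _ k, mul_pow, ← pow_mul, ← pow_add, two_mul]
    rw [polar_gold]
    simp only [mul_add, Tr, map_add] at hsnd ⊢
    rw [hsnd]
  simp_rw [hpolar, ← CharTwo.add_eq_zero (b := w), add_comm (w ^ 2 ^ (2 * k))]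
  refine ⟨fun h => (traceForm_nondegenerate (ZMod 2) _).1 _ fun y => ?_, fun h x => by simp [h, Tr]⟩
  obtain ⟨x, rfl⟩ := (iterateFrobeniusEquiv (GaloisField 2 n) 2 k).surjective y
  rw [Algebra.traceForm_apply, iterateFrobeniusEquiv_def, mul_comm]
  exact h x

theorem polar_gold_eq_zero_iff_pow_gcd (h : Odd (n / n.gcd k)) (w : GaloisField 2 n) :
    (∀ x, polar (fun x => Tr 2 n (x ^ (2 ^ k + 1) + a * x)) x w = 0) ↔ w ^ 2 ^ n.gcd k = w := by
  have hn : n ≠ 0 := by rintro rfl; simp at h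
  have hw : Function.IsPeriodicPt (frobenius (GaloisField 2 n) 2) n w := by
    rw [isPeriodicPt_frobenius_iff, ← GaloisField.card 2 n hn, Nat.card_eq_fintype_card,
      FiniteField.pow_card]
  rw [polar_gold_eq_zero_iff, ← isPeriodicPt_frobenius_iff, ← isPeriodicPt_frobenius_iff]
  refine ⟨fun h2k => ?_, fun he => he.trans_dvd (dvd_mul_of_dvd_right (Nat.gcd_dvd_right n k) 2)⟩
  rw [← Nat.gcd_two_mul_right_of_odd h]
  exact hw.gcd h2k

end Gold

theorem gold_walsh_three_valued_general (n k : ℕ)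
    (h : Odd (n / Nat.gcd n k)) :
    ∀ a : GaloisField 2 n,
      (∑ x : GaloisField 2 n, ew 2 (Tr 2 n (x ^ (2 ^ k + 1) + a * x))) = 0 ∨
      (∑ x : GaloisField 2 n, ew 2 (Tr 2 n (x ^ (2 ^ k + 1) + a * x)))
        = 2 ^ ((n + Nat.gcd n k) / 2) ∨
      (∑ x : GaloisField 2 n, ew 2 (Tr 2 n (x ^ (2 ^ k + 1) + a * x)))
        = -2 ^ ((n + Nat.gcd n k) / 2) := by
  intro a
  have hn : n ≠ 0 := by rintro rfl; simp at h
  have hf := polar_gold_add_left k a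
  have hradical : Nat.card (polarHom hf).ker = 2 ^ n.gcd k := by
    rw [← GaloisField.card_pow_eq_self hn (Nat.gcd_dvd_left n k)]
    exact Nat.card_congr <| Equiv.subtypeEquivRight fun w =>
      (mem_ker_polarHom hf).trans (polar_gold_eq_zero_iff_pow_gcd k a h w)
  have hsquare : (2 : ℂ) ^ n * 2 ^ n.gcd k =
      2 ^ ((n + n.gcd k) / 2) * 2 ^ ((n + n.gcd k) / 2) := by
    rw [← pow_add, ← pow_add, ← two_mul, Nat.two_mul_div_two_of_even (Nat.even_add_gcd_of_odd h)]
  simp_rw [ew_eq_stdAddChar]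
  rcases sum_stdAddChar_mul_self_eq_zero_or hf with hzero | hcard
  · exact Or.inl (mul_self_eq_zero.mp hzero)
  · rw [hradical, GaloisField.card 2 n hn] at hcard
    push_cast at hcard
    exact Or.inr (mul_self_eq_mul_self_iff.mp (hcard.trans hsquare))

/-- Gold's theorem: the Walsh transform of `Tr(x^{2^k+1})` takes only the
values `0` and `±2^{(n+e)/2}` where `e = gcd(n,k)` and `n/e` is odd. -/
theorem gold_walsh_three_valued (n k : ℕ) (hn : 1 ≤ n) (hk : 1 ≤ k)
    (h : Odd (n / Nat.gcd n k)) :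
    ∀ a : GaloisField 2 n,
      (∑ x : GaloisField 2 n, ew 2 (Tr 2 n (x ^ (2 ^ k + 1) + a * x))) = 0 ∨
      (∑ x : GaloisField 2 n, ew 2 (Tr 2 n (x ^ (2 ^ k + 1) + a * x)))
        = 2 ^ ((n + Nat.gcd n k) / 2) ∨
      (∑ x : GaloisField 2 n, ew 2 (Tr 2 n (x ^ (2 ^ k + 1) + a * x)))
        = -2 ^ ((n + Nat.gcd n k) / 2) :=
  gold_walsh_three_valued_general n k h
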